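/- arXiv:2307.06438 — 2 statements merged into one kernel-verified Lean document; each statement's English description precedes it below -/
import Mathlib

section
/- Let A be the linear operator on 2-forms on ℝ^8 defined by (Aφ)_{kl} = φ_{ij}Φ_{ijkl}. Then A satisfies the quadratic relation A∘A + 4A − 12·id = 0 on the space of 2-forms; equivalently, for every 2-form φ and all k,l: (Aφ)_{ij}Φ_{ijkl} = 12φ_{kl} − 4(Aφ)_{kl}. -/
/-!
We work in ℝ⁸ with the standard basis `e₀, …, e₇`.  A `k`-form is a totally antisymmetric
map `(Fin 8)^k → ℝ`; repeated indices are summed over `Fin 8` and `kd` is the Kronecker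
delta.  `Phi` is the fundamental 4-form of the standard `Spin(7)`-structure on ℝ⁸,
`Φ = -e₀₁₂₇ + e₀₂₃₆ - e₀₃₄₇ - e₀₅₆₇ + e₀₁₄₆ + e₀₂₄₅ - e₀₁₃₅
     - e₃₄₅₆ - e₁₄₅₇ - e₁₂₅₆ - e₁₂₃₄ - e₂₃₅₇ - e₁₃₆₇ + e₂₄₆₇`.
-/

noncomputable section

/-- Kronecker delta on `Fin 8`. -/
def kd (a b : Fin 8) : ℝ := if a = b then 1 else 0

/-- Component at the indices `(i,j,k,l)` of the wedge product `e_a ∧ e_b ∧ e_c ∧ e_d`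
of standard coordinate 1-forms, normalized so that `(e_a ∧ e_b ∧ e_c ∧ e_d)_{abcd} = 1`;
it is the alternating sum of products of Kronecker deltas. -/
def wedge4 (a b c d i j k l : Fin 8) : ℝ :=
  Matrix.det !![kd a i, kd a j, kd a k, kd a l;
                kd b i, kd b j, kd b k, kd b l;
                kd c i, kd c j, kd c k, kd c l;
                kd d i, kd d j, kd d k, kd d l]

/-- The fundamental 4-form `Φ` of the standard `Spin(7)`-structure on `ℝ⁸`, in components:
the totally antisymmetric 4-tensor with `Φ_{0127} = -1`, `Φ_{0236} = 1`, `Φ_{0347} = -1`,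
`Φ_{0567} = -1`, `Φ_{0146} = 1`, `Φ_{0245} = 1`, `Φ_{0135} = -1`, `Φ_{3456} = -1`,
`Φ_{1457} = -1`, `Φ_{1256} = -1`, `Φ_{1234} = -1`, `Φ_{2357} = -1`, `Φ_{1367} = -1`,
`Φ_{2467} = 1`, all components not obtained from these by permutation being zero. -/
def Phi (i j k l : Fin 8) : ℝ :=
    -wedge4 0 1 2 7 i j k l + wedge4 0 2 3 6 i j k l - wedge4 0 3 4 7 i j k l
  - wedge4 0 5 6 7 i j k l + wedge4 0 1 4 6 i j k l + wedge4 0 2 4 5 i j k l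
  - wedge4 0 1 3 5 i j k l - wedge4 3 4 5 6 i j k l - wedge4 1 4 5 7 i j k l
  - wedge4 1 2 5 6 i j k l - wedge4 1 2 3 4 i j k l - wedge4 2 3 5 7 i j k l
  - wedge4 1 3 6 7 i j k l + wedge4 2 4 6 7 i j k l

set_option maxHeartbeats 2000000 in
theorem my_det_fin_four {R : Type*} [CommRing R] (A : Matrix (Fin 4) (Fin 4) R) :
    A.det = A 0 0*A 1 1*A 2 2*A 3 3 - A 0 0*A 1 1*A 2 3*A 3 2 - A 0 0*A 1 2*A 2 1*A 3 3 + A 0 0*A 1 2*A 2 3*A 3 1 + A 0 0*A 1 3*A 2 1*A 3 2 - A 0 0*A 1 3*A 2 2*A 3 1 - A 0 1*A 1 0*A 2 2*A 3 3 + A 0 1*A 1 0*A 2 3*A 3 2 + A 0 1*A 1 2*A 2 0*A 3 3 - A 0 1*A 1 2*A 2 3*A 3 0 - A 0 1*A 1 3*A 2 0*A 3 2 + A 0 1*A 1 3*A 2 2*A 3 0 + A 0 2*A 1 0*A 2 1*A 3 3 - A 0 2*A 1 0*A 2 3*A 3 1 - A 0 2*A 1 1*A 2 0*A 3 3 + A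 0 2*A 1 1*A 2 3*A 3 0 + A 0 2*A 1 3*A 2 0*A 3 1 - A 0 2*A 1 3*A 2 1*A 3 0 - A 0 3*A 1 0*A 2 1*A 3 2 + A 0 3*A 1 0*A 2 2*A 3 1 + A 0 3*A 1 1*A 2 0*A 3 2 - A 0 3*A 1 1*A 2 2*A 3 0 - A 0 3*A 1 2*A 2 0*A 3 1 + A 0 3*A 1 2*A 2 1*A 3 0 := by
  rw [Matrix.det_succ_row_zero]
  simp only [Fin.sum_univ_succ, Fin.sum_univ_zero, Matrix.det_fin_three,
    Matrix.submatrix_apply, Fin.succ_zero_eq_one, Fin.succ_one_eq_two,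
    Fin.val_zero, Fin.val_succ, Fin.zero_succAbove, Fin.succ_succAbove_zero,
    Fin.succ_succAbove_one, pow_succ, pow_zero]
  norm_num [Fin.succ_succAbove_succ,
    show Fin.succ (2 : Fin 3) = 3 from rfl,
    show Fin.succAbove (1 : Fin 4) 2 = 3 from rfl,
    show Fin.succAbove (2 : Fin 4) 2 = 3 from rfl,
    show Fin.succAbove (3 : Fin 4) 2 = 2 from rfl,
    show Fin.castSucc (2 : Fin 3) = 2 from rfl]
  ring

def kdZ (a b : Fin 8) : ℤ := if a.val = b.val then 1 else 0

def wedge4Z (a b c d i j k l : Fin 8) : ℤ :=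
  kdZ a i*kdZ b j*kdZ c k*kdZ d l - kdZ a i*kdZ b j*kdZ c l*kdZ d k - kdZ a i*kdZ b k*kdZ c j*kdZ d l + kdZ a i*kdZ b k*kdZ c l*kdZ d j + kdZ a i*kdZ b l*kdZ c j*kdZ d k - kdZ a i*kdZ b l*kdZ c k*kdZ d j - kdZ a j*kdZ b i*kdZ c k*kdZ d l + kdZ a j*kdZ b i*kdZ c l*kdZ d k + kdZ a j*kdZ b k*kdZ c i*kdZ d l - kdZ a j*kdZ b k*kdZ c l*kdZ d i - kdZ a j*kdZ b l*kdZ c i*kdZ d k + kdZ a j*kdZ b l*kdZ c k*kdZ d i + kdZ a k*kdZ b i*kdZ c j*kdZ d l - kdZ a k*kdZ b i*kdZ c l*kdZ d j - kdZ a k*kdZ b j*kdZ c i*kdZ d l + kdZ a k*kdZ b j*kdZ c l*kdZ d i + kdZ a k*kdZ b l*kdZ c i*kdZ d j - kdZ a k*kdZ b l*kdZ c j*kdZ d i - kdZ a l*kdZ b i*kdZ c j*kdZ d k + kdZ a l*kdZ b i*kdZ c k*kdZ d j + kdZ a l*kdZ b j*kdZ c i*kdZ d k - kdZ a l*kdZ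 b j*kdZ c k*kdZ d i - kdZ a l*kdZ b k*kdZ c i*kdZ d j + kdZ a l*kdZ b k*kdZ c j*kdZ d i

def PhiZ (i j k l : Fin 8) : ℤ :=
    -wedge4Z 0 1 2 7 i j k l + wedge4Z 0 2 3 6 i j k l - wedge4Z 0 3 4 7 i j k l
  - wedge4Z 0 5 6 7 i j k l + wedge4Z 0 1 4 6 i j k l + wedge4Z 0 2 4 5 i j k l
  - wedge4Z 0 1 3 5 i j k l - wedge4Z 3 4 5 6 i j k l - wedge4Z 1 4 5 7 i j k l
  - wedge4Z 1 2 5 6 i j k l - wedge4Z 1 2 3 4 i j k l - wedge4Z 2 3 5 7 i j k l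
  - wedge4Z 1 3 6 7 i j k l + wedge4Z 2 4 6 7 i j k l

def phiT : Fin 8 → Fin 8 → Fin 8 → Fin 8 → ℤ :=
![
![
  ![
    ![0, 0, 0, 0, 0, 0, 0, 0],
    ![0, 0, 0, 0, 0, 0, 0, 0],
    ![0, 0, 0, 0, 0, 0, 0, 0],
    ![0, 0, 0, 0, 0, 0, 0, 0],
    ![0, 0, 0, 0, 0, 0, 0, 0],
    ![0, 0, 0, 0, 0, 0, 0, 0],
    ![0, 0, 0, 0, 0, 0, 0, 0],
    ![0, 0, 0, 0, 0, 0, 0, 0]],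
  ![
    ![0, 0, 0, 0, 0, 0, 0, 0],
    ![0, 0, 0, 0, 0, 0, 0, 0],
    ![0, 0, 0, 0, 0, 0, 0, -1],
    ![0, 0, 0, 0, 0, -1, 0, 0],
    ![0, 0, 0, 0, 0, 0, 1, 0],
    ![0, 0, 0, 1, 0, 0, 0, 0],
    ![0, 0, 0, 0, -1, 0, 0, 0],
    ![0, 0, 1, 0, 0, 0, 0, 0]],
  ![
    ![0, 0, 0, 0, 0, 0, 0, 0],
    ![0, 0, 0, 0, 0, 0, 0, 1],
    ![0, 0, 0, 0, 0, 0, 0, 0],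
    ![0, 0, 0, 0, 0, 0, 1, 0],
    ![0, 0, 0, 0, 0, 1, 0, 0],
    ![0, 0, 0, 0, -1, 0, 0, 0],
    ![0, 0, 0, -1, 0, 0, 0, 0],
    ![0, -1, 0, 0, 0, 0, 0, 0]],
  ![
    ![0, 0, 0, 0, 0, 0, 0, 0],
    ![0, 0, 0, 0, 0, 1, 0, 0],
    ![0, 0, 0, 0, 0, 0, -1, 0],
    ![0, 0, 0, 0, 0, 0, 0, 0],
    ![0, 0, 0, 0, 0, 0, 0, -1],
    ![0, -1, 0, 0, 0, 0, 0, 0],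
    ![0, 0, 1, 0, 0, 0, 0, 0],
    ![0, 0, 0, 0, 1, 0, 0, 0]],
  ![
    ![0, 0, 0, 0, 0, 0, 0, 0],
    ![0, 0, 0, 0, 0, 0, -1, 0],
    ![0, 0, 0, 0, 0, -1, 0, 0],
    ![0, 0, 0, 0, 0, 0, 0, 1],
    ![0, 0, 0, 0, 0, 0, 0, 0],
    ![0, 0, 1, 0, 0, 0, 0, 0],
    ![0, 1, 0, 0, 0, 0, 0, 0],
    ![0, 0, 0, -1, 0, 0, 0, 0]],
  ![
    ![0, 0, 0, 0, 0, 0, 0, 0],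
    ![0, 0, 0, -1, 0, 0, 0, 0],
    ![0, 0, 0, 0, 1, 0, 0, 0],
    ![0, 1, 0, 0, 0, 0, 0, 0],
    ![0, 0, -1, 0, 0, 0, 0, 0],
    ![0, 0, 0, 0, 0, 0, 0, 0],
    ![0, 0, 0, 0, 0, 0, 0, -1],
    ![0, 0, 0, 0, 0, 0, 1, 0]],
  ![
    ![0, 0, 0, 0, 0, 0, 0, 0],
    ![0, 0, 0, 0, 1, 0, 0, 0],
    ![0, 0, 0, 1, 0, 0, 0, 0],
    ![0, 0, -1, 0, 0, 0, 0, 0],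
    ![0, -1, 0, 0, 0, 0, 0, 0],
    ![0, 0, 0, 0, 0, 0, 0, 1],
    ![0, 0, 0, 0, 0, 0, 0, 0],
    ![0, 0, 0, 0, 0, -1, 0, 0]],
  ![
    ![0, 0, 0, 0, 0, 0, 0, 0],
    ![0, 0, -1, 0, 0, 0, 0, 0],
    ![0, 1, 0, 0, 0, 0, 0, 0],
    ![0, 0, 0, 0, -1, 0, 0, 0],
    ![0, 0, 0, 1, 0, 0, 0, 0],
    ![0, 0, 0, 0, 0, 0, -1, 0],
    ![0, 0, 0, 0, 0, 1, 0, 0],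
    ![0, 0, 0, 0, 0, 0, 0, 0]]],
![
  ![
    ![0, 0, 0, 0, 0, 0, 0, 0],
    ![0, 0, 0, 0, 0, 0, 0, 0],
    ![0, 0, 0, 0, 0, 0, 0, 1],
    ![0, 0, 0, 0, 0, 1, 0, 0],
    ![0, 0, 0, 0, 0, 0, -1, 0],
    ![0, 0, 0, -1, 0, 0, 0, 0],
    ![0, 0, 0, 0, 1, 0, 0, 0],
    ![0, 0, -1, 0, 0, 0, 0, 0]],
  ![
    ![0, 0, 0, 0, 0, 0, 0, 0],
    ![0, 0, 0, 0, 0, 0, 0, 0],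
    ![0, 0, 0, 0, 0, 0, 0, 0],
    ![0, 0, 0, 0, 0, 0, 0, 0],
    ![0, 0, 0, 0, 0, 0, 0, 0],
    ![0, 0, 0, 0, 0, 0, 0, 0],
    ![0, 0, 0, 0, 0, 0, 0, 0],
    ![0, 0, 0, 0, 0, 0, 0, 0]],
  ![
    ![0, 0, 0, 0, 0, 0, 0, -1],
    ![0, 0, 0, 0, 0, 0, 0, 0],
    ![0, 0, 0, 0, 0, 0, 0, 0],
    ![0, 0, 0, 0, -1, 0, 0, 0],
    ![0, 0, 0, 1, 0, 0, 0, 0],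
    ![0, 0, 0, 0, 0, 0, -1, 0],
    ![0, 0, 0, 0, 0, 1, 0, 0],
    ![1, 0, 0, 0, 0, 0, 0, 0]],
  ![
    ![0, 0, 0, 0, 0, -1, 0, 0],
    ![0, 0, 0, 0, 0, 0, 0, 0],
    ![0, 0, 0, 0, 1, 0, 0, 0],
    ![0, 0, 0, 0, 0, 0, 0, 0],
    ![0, 0, -1, 0, 0, 0, 0, 0],
    ![1, 0, 0, 0, 0, 0, 0, 0],
    ![0, 0, 0, 0, 0, 0, 0, -1],
    ![0, 0, 0, 0, 0, 0, 1, 0]],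
  ![
    ![0, 0, 0, 0, 0, 0, 1, 0],
    ![0, 0, 0, 0, 0, 0, 0, 0],
    ![0, 0, 0, -1, 0, 0, 0, 0],
    ![0, 0, 1, 0, 0, 0, 0, 0],
    ![0, 0, 0, 0, 0, 0, 0, 0],
    ![0, 0, 0, 0, 0, 0, 0, -1],
    ![-1, 0, 0, 0, 0, 0, 0, 0],
    ![0, 0, 0, 0, 0, 1, 0, 0]],
  ![
    ![0, 0, 0, 1, 0, 0, 0, 0],
    ![0, 0, 0, 0, 0, 0, 0, 0],
    ![0, 0, 0, 0, 0, 0, 1, 0],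
    ![-1, 0, 0, 0, 0, 0, 0, 0],
    ![0, 0, 0, 0, 0, 0, 0, 1],
    ![0, 0, 0, 0, 0, 0, 0, 0],
    ![0, 0, -1, 0, 0, 0, 0, 0],
    ![0, 0, 0, 0, -1, 0, 0, 0]],
  ![
    ![0, 0, 0, 0, -1, 0, 0, 0],
    ![0, 0, 0, 0, 0, 0, 0, 0],
    ![0, 0, 0, 0, 0, -1, 0, 0],
    ![0, 0, 0, 0, 0, 0, 0, 1],
    ![1, 0, 0, 0, 0, 0, 0, 0],
    ![0, 0, 1, 0, 0, 0, 0, 0],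
    ![0, 0, 0, 0, 0, 0, 0, 0],
    ![0, 0, 0, -1, 0, 0, 0, 0]],
  ![
    ![0, 0, 1, 0, 0, 0, 0, 0],
    ![0, 0, 0, 0, 0, 0, 0, 0],
    ![-1, 0, 0, 0, 0, 0, 0, 0],
    ![0, 0, 0, 0, 0, 0, -1, 0],
    ![0, 0, 0, 0, 0, -1, 0, 0],
    ![0, 0, 0, 0, 1, 0, 0, 0],
    ![0, 0, 0, 1, 0, 0, 0, 0],
    ![0, 0, 0, 0, 0, 0, 0, 0]]],
![
  ![
    ![0, 0, 0, 0, 0, 0, 0, 0],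
    ![0, 0, 0, 0, 0, 0, 0, -1],
    ![0, 0, 0, 0, 0, 0, 0, 0],
    ![0, 0, 0, 0, 0, 0, -1, 0],
    ![0, 0, 0, 0, 0, -1, 0, 0],
    ![0, 0, 0, 0, 1, 0, 0, 0],
    ![0, 0, 0, 1, 0, 0, 0, 0],
    ![0, 1, 0, 0, 0, 0, 0, 0]],
  ![
    ![0, 0, 0, 0, 0, 0, 0, 1],
    ![0, 0, 0, 0, 0, 0, 0, 0],
    ![0, 0, 0, 0, 0, 0, 0, 0],
    ![0, 0, 0, 0, 1, 0, 0, 0],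
    ![0, 0, 0, -1, 0, 0, 0, 0],
    ![0, 0, 0, 0, 0, 0, 1, 0],
    ![0, 0, 0, 0, 0, -1, 0, 0],
    ![-1, 0, 0, 0, 0, 0, 0, 0]],
  ![
    ![0, 0, 0, 0, 0, 0, 0, 0],
    ![0, 0, 0, 0, 0, 0, 0, 0],
    ![0, 0, 0, 0, 0, 0, 0, 0],
    ![0, 0, 0, 0, 0, 0, 0, 0],
    ![0, 0, 0, 0, 0, 0, 0, 0],
    ![0, 0, 0, 0, 0, 0, 0, 0],
    ![0, 0, 0, 0, 0, 0, 0, 0],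
    ![0, 0, 0, 0, 0, 0, 0, 0]],
  ![
    ![0, 0, 0, 0, 0, 0, 1, 0],
    ![0, 0, 0, 0, -1, 0, 0, 0],
    ![0, 0, 0, 0, 0, 0, 0, 0],
    ![0, 0, 0, 0, 0, 0, 0, 0],
    ![0, 1, 0, 0, 0, 0, 0, 0],
    ![0, 0, 0, 0, 0, 0, 0, -1],
    ![-1, 0, 0, 0, 0, 0, 0, 0],
    ![0, 0, 0, 0, 0, 1, 0, 0]],
  ![
    ![0, 0, 0, 0, 0, 1, 0, 0],
    ![0, 0, 0, 1, 0, 0, 0, 0],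
    ![0, 0, 0, 0, 0, 0, 0, 0],
    ![0, -1, 0, 0, 0, 0, 0, 0],
    ![0, 0, 0, 0, 0, 0, 0, 0],
    ![-1, 0, 0, 0, 0, 0, 0, 0],
    ![0, 0, 0, 0, 0, 0, 0, 1],
    ![0, 0, 0, 0, 0, 0, -1, 0]],
  ![
    ![0, 0, 0, 0, -1, 0, 0, 0],
    ![0, 0, 0, 0, 0, 0, -1, 0],
    ![0, 0, 0, 0, 0, 0, 0, 0],
    ![0, 0, 0, 0, 0, 0, 0, 1],
    ![1, 0, 0, 0, 0, 0, 0, 0],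
    ![0, 0, 0, 0, 0, 0, 0, 0],
    ![0, 1, 0, 0, 0, 0, 0, 0],
    ![0, 0, 0, -1, 0, 0, 0, 0]],
  ![
    ![0, 0, 0, -1, 0, 0, 0, 0],
    ![0, 0, 0, 0, 0, 1, 0, 0],
    ![0, 0, 0, 0, 0, 0, 0, 0],
    ![1, 0, 0, 0, 0, 0, 0, 0],
    ![0, 0, 0, 0, 0, 0, 0, -1],
    ![0, -1, 0, 0, 0, 0, 0, 0],
    ![0, 0, 0, 0, 0, 0, 0, 0],
    ![0, 0, 0, 0, 1, 0, 0, 0]],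
  ![
    ![0, -1, 0, 0, 0, 0, 0, 0],
    ![1, 0, 0, 0, 0, 0, 0, 0],
    ![0, 0, 0, 0, 0, 0, 0, 0],
    ![0, 0, 0, 0, 0, -1, 0, 0],
    ![0, 0, 0, 0, 0, 0, 1, 0],
    ![0, 0, 0, 1, 0, 0, 0, 0],
    ![0, 0, 0, 0, -1, 0, 0, 0],
    ![0, 0, 0, 0, 0, 0, 0, 0]]],
![
  ![
    ![0, 0, 0, 0, 0, 0, 0, 0],
    ![0, 0, 0, 0, 0, -1, 0, 0],
    ![0, 0, 0, 0, 0, 0, 1, 0],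
    ![0, 0, 0, 0, 0, 0, 0, 0],
    ![0, 0, 0, 0, 0, 0, 0, 1],
    ![0, 1, 0, 0, 0, 0, 0, 0],
    ![0, 0, -1, 0, 0, 0, 0, 0],
    ![0, 0, 0, 0, -1, 0, 0, 0]],
  ![
    ![0, 0, 0, 0, 0, 1, 0, 0],
    ![0, 0, 0, 0, 0, 0, 0, 0],
    ![0, 0, 0, 0, -1, 0, 0, 0],
    ![0, 0, 0, 0, 0, 0, 0, 0],
    ![0, 0, 1, 0, 0, 0, 0, 0],
    ![-1, 0, 0, 0, 0, 0, 0, 0],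
    ![0, 0, 0, 0, 0, 0, 0, 1],
    ![0, 0, 0, 0, 0, 0, -1, 0]],
  ![
    ![0, 0, 0, 0, 0, 0, -1, 0],
    ![0, 0, 0, 0, 1, 0, 0, 0],
    ![0, 0, 0, 0, 0, 0, 0, 0],
    ![0, 0, 0, 0, 0, 0, 0, 0],
    ![0, -1, 0, 0, 0, 0, 0, 0],
    ![0, 0, 0, 0, 0, 0, 0, 1],
    ![1, 0, 0, 0, 0, 0, 0, 0],
    ![0, 0, 0, 0, 0, -1, 0, 0]],
  ![
    ![0, 0, 0, 0, 0, 0, 0, 0],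
    ![0, 0, 0, 0, 0, 0, 0, 0],
    ![0, 0, 0, 0, 0, 0, 0, 0],
    ![0, 0, 0, 0, 0, 0, 0, 0],
    ![0, 0, 0, 0, 0, 0, 0, 0],
    ![0, 0, 0, 0, 0, 0, 0, 0],
    ![0, 0, 0, 0, 0, 0, 0, 0],
    ![0, 0, 0, 0, 0, 0, 0, 0]],
  ![
    ![0, 0, 0, 0, 0, 0, 0, -1],
    ![0, 0, -1, 0, 0, 0, 0, 0],
    ![0, 1, 0, 0, 0, 0, 0, 0],
    ![0, 0, 0, 0, 0, 0, 0, 0],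
    ![0, 0, 0, 0, 0, 0, 0, 0],
    ![0, 0, 0, 0, 0, 0, -1, 0],
    ![0, 0, 0, 0, 0, 1, 0, 0],
    ![1, 0, 0, 0, 0, 0, 0, 0]],
  ![
    ![0, -1, 0, 0, 0, 0, 0, 0],
    ![1, 0, 0, 0, 0, 0, 0, 0],
    ![0, 0, 0, 0, 0, 0, 0, -1],
    ![0, 0, 0, 0, 0, 0, 0, 0],
    ![0, 0, 0, 0, 0, 0, 1, 0],
    ![0, 0, 0, 0, 0, 0, 0, 0],
    ![0, 0, 0, 0, -1, 0, 0, 0],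
    ![0, 0, 1, 0, 0, 0, 0, 0]],
  ![
    ![0, 0, 1, 0, 0, 0, 0, 0],
    ![0, 0, 0, 0, 0, 0, 0, -1],
    ![-1, 0, 0, 0, 0, 0, 0, 0],
    ![0, 0, 0, 0, 0, 0, 0, 0],
    ![0, 0, 0, 0, 0, -1, 0, 0],
    ![0, 0, 0, 0, 1, 0, 0, 0],
    ![0, 0, 0, 0, 0, 0, 0, 0],
    ![0, 1, 0, 0, 0, 0, 0, 0]],
  ![
    ![0, 0, 0, 0, 1, 0, 0, 0],
    ![0, 0, 0, 0, 0, 0, 1, 0],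
    ![0, 0, 0, 0, 0, 1, 0, 0],
    ![0, 0, 0, 0, 0, 0, 0, 0],
    ![-1, 0, 0, 0, 0, 0, 0, 0],
    ![0, 0, -1, 0, 0, 0, 0, 0],
    ![0, -1, 0, 0, 0, 0, 0, 0],
    ![0, 0, 0, 0, 0, 0, 0, 0]]],
![
  ![
    ![0, 0, 0, 0, 0, 0, 0, 0],
    ![0, 0, 0, 0, 0, 0, 1, 0],
    ![0, 0, 0, 0, 0, 1, 0, 0],
    ![0, 0, 0, 0, 0, 0, 0, -1],
    ![0, 0, 0, 0, 0, 0, 0, 0],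
    ![0, 0, -1, 0, 0, 0, 0, 0],
    ![0, -1, 0, 0, 0, 0, 0, 0],
    ![0, 0, 0, 1, 0, 0, 0, 0]],
  ![
    ![0, 0, 0, 0, 0, 0, -1, 0],
    ![0, 0, 0, 0, 0, 0, 0, 0],
    ![0, 0, 0, 1, 0, 0, 0, 0],
    ![0, 0, -1, 0, 0, 0, 0, 0],
    ![0, 0, 0, 0, 0, 0, 0, 0],
    ![0, 0, 0, 0, 0, 0, 0, 1],
    ![1, 0, 0, 0, 0, 0, 0, 0],
    ![0, 0, 0, 0, 0, -1, 0, 0]],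
  ![
    ![0, 0, 0, 0, 0, -1, 0, 0],
    ![0, 0, 0, -1, 0, 0, 0, 0],
    ![0, 0, 0, 0, 0, 0, 0, 0],
    ![0, 1, 0, 0, 0, 0, 0, 0],
    ![0, 0, 0, 0, 0, 0, 0, 0],
    ![1, 0, 0, 0, 0, 0, 0, 0],
    ![0, 0, 0, 0, 0, 0, 0, -1],
    ![0, 0, 0, 0, 0, 0, 1, 0]],
  ![
    ![0, 0, 0, 0, 0, 0, 0, 1],
    ![0, 0, 1, 0, 0, 0, 0, 0],
    ![0, -1, 0, 0, 0, 0, 0, 0],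
    ![0, 0, 0, 0, 0, 0, 0, 0],
    ![0, 0, 0, 0, 0, 0, 0, 0],
    ![0, 0, 0, 0, 0, 0, 1, 0],
    ![0, 0, 0, 0, 0, -1, 0, 0],
    ![-1, 0, 0, 0, 0, 0, 0, 0]],
  ![
    ![0, 0, 0, 0, 0, 0, 0, 0],
    ![0, 0, 0, 0, 0, 0, 0, 0],
    ![0, 0, 0, 0, 0, 0, 0, 0],
    ![0, 0, 0, 0, 0, 0, 0, 0],
    ![0, 0, 0, 0, 0, 0, 0, 0],
    ![0, 0, 0, 0, 0, 0, 0, 0],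
    ![0, 0, 0, 0, 0, 0, 0, 0],
    ![0, 0, 0, 0, 0, 0, 0, 0]],
  ![
    ![0, 0, 1, 0, 0, 0, 0, 0],
    ![0, 0, 0, 0, 0, 0, 0, -1],
    ![-1, 0, 0, 0, 0, 0, 0, 0],
    ![0, 0, 0, 0, 0, 0, -1, 0],
    ![0, 0, 0, 0, 0, 0, 0, 0],
    ![0, 0, 0, 0, 0, 0, 0, 0],
    ![0, 0, 0, 1, 0, 0, 0, 0],
    ![0, 1, 0, 0, 0, 0, 0, 0]],
  ![
    ![0, 1, 0, 0, 0, 0, 0, 0],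
    ![-1, 0, 0, 0, 0, 0, 0, 0],
    ![0, 0, 0, 0, 0, 0, 0, 1],
    ![0, 0, 0, 0, 0, 1, 0, 0],
    ![0, 0, 0, 0, 0, 0, 0, 0],
    ![0, 0, 0, -1, 0, 0, 0, 0],
    ![0, 0, 0, 0, 0, 0, 0, 0],
    ![0, 0, -1, 0, 0, 0, 0, 0]],
  ![
    ![0, 0, 0, -1, 0, 0, 0, 0],
    ![0, 0, 0, 0, 0, 1, 0, 0],
    ![0, 0, 0, 0, 0, 0, -1, 0],
    ![1, 0, 0, 0, 0, 0, 0, 0],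
    ![0, 0, 0, 0, 0, 0, 0, 0],
    ![0, -1, 0, 0, 0, 0, 0, 0],
    ![0, 0, 1, 0, 0, 0, 0, 0],
    ![0, 0, 0, 0, 0, 0, 0, 0]]],
![
  ![
    ![0, 0, 0, 0, 0, 0, 0, 0],
    ![0, 0, 0, 1, 0, 0, 0, 0],
    ![0, 0, 0, 0, -1, 0, 0, 0],
    ![0, -1, 0, 0, 0, 0, 0, 0],
    ![0, 0, 1, 0, 0, 0, 0, 0],
    ![0, 0, 0, 0, 0, 0, 0, 0],
    ![0, 0, 0, 0, 0, 0, 0, 1],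
    ![0, 0, 0, 0, 0, 0, -1, 0]],
  ![
    ![0, 0, 0, -1, 0, 0, 0, 0],
    ![0, 0, 0, 0, 0, 0, 0, 0],
    ![0, 0, 0, 0, 0, 0, -1, 0],
    ![1, 0, 0, 0, 0, 0, 0, 0],
    ![0, 0, 0, 0, 0, 0, 0, -1],
    ![0, 0, 0, 0, 0, 0, 0, 0],
    ![0, 0, 1, 0, 0, 0, 0, 0],
    ![0, 0, 0, 0, 1, 0, 0, 0]],
  ![
    ![0, 0, 0, 0, 1, 0, 0, 0],
    ![0, 0, 0, 0, 0, 0, 1, 0],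
    ![0, 0, 0, 0, 0, 0, 0, 0],
    ![0, 0, 0, 0, 0, 0, 0, -1],
    ![-1, 0, 0, 0, 0, 0, 0, 0],
    ![0, 0, 0, 0, 0, 0, 0, 0],
    ![0, -1, 0, 0, 0, 0, 0, 0],
    ![0, 0, 0, 1, 0, 0, 0, 0]],
  ![
    ![0, 1, 0, 0, 0, 0, 0, 0],
    ![-1, 0, 0, 0, 0, 0, 0, 0],
    ![0, 0, 0, 0, 0, 0, 0, 1],
    ![0, 0, 0, 0, 0, 0, 0, 0],
    ![0, 0, 0, 0, 0, 0, -1, 0],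
    ![0, 0, 0, 0, 0, 0, 0, 0],
    ![0, 0, 0, 0, 1, 0, 0, 0],
    ![0, 0, -1, 0, 0, 0, 0, 0]],
  ![
    ![0, 0, -1, 0, 0, 0, 0, 0],
    ![0, 0, 0, 0, 0, 0, 0, 1],
    ![1, 0, 0, 0, 0, 0, 0, 0],
    ![0, 0, 0, 0, 0, 0, 1, 0],
    ![0, 0, 0, 0, 0, 0, 0, 0],
    ![0, 0, 0, 0, 0, 0, 0, 0],
    ![0, 0, 0, -1, 0, 0, 0, 0],
    ![0, -1, 0, 0, 0, 0, 0, 0]],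
  ![
    ![0, 0, 0, 0, 0, 0, 0, 0],
    ![0, 0, 0, 0, 0, 0, 0, 0],
    ![0, 0, 0, 0, 0, 0, 0, 0],
    ![0, 0, 0, 0, 0, 0, 0, 0],
    ![0, 0, 0, 0, 0, 0, 0, 0],
    ![0, 0, 0, 0, 0, 0, 0, 0],
    ![0, 0, 0, 0, 0, 0, 0, 0],
    ![0, 0, 0, 0, 0, 0, 0, 0]],
  ![
    ![0, 0, 0, 0, 0, 0, 0, -1],
    ![0, 0, -1, 0, 0, 0, 0, 0],
    ![0, 1, 0, 0, 0, 0, 0, 0],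
    ![0, 0, 0, 0, -1, 0, 0, 0],
    ![0, 0, 0, 1, 0, 0, 0, 0],
    ![0, 0, 0, 0, 0, 0, 0, 0],
    ![0, 0, 0, 0, 0, 0, 0, 0],
    ![1, 0, 0, 0, 0, 0, 0, 0]],
  ![
    ![0, 0, 0, 0, 0, 0, 1, 0],
    ![0, 0, 0, 0, -1, 0, 0, 0],
    ![0, 0, 0, -1, 0, 0, 0, 0],
    ![0, 0, 1, 0, 0, 0, 0, 0],
    ![0, 1, 0, 0, 0, 0, 0, 0],
    ![0, 0, 0, 0, 0, 0, 0, 0],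
    ![-1, 0, 0, 0, 0, 0, 0, 0],
    ![0, 0, 0, 0, 0, 0, 0, 0]]],
![
  ![
    ![0, 0, 0, 0, 0, 0, 0, 0],
    ![0, 0, 0, 0, -1, 0, 0, 0],
    ![0, 0, 0, -1, 0, 0, 0, 0],
    ![0, 0, 1, 0, 0, 0, 0, 0],
    ![0, 1, 0, 0, 0, 0, 0, 0],
    ![0, 0, 0, 0, 0, 0, 0, -1],
    ![0, 0, 0, 0, 0, 0, 0, 0],
    ![0, 0, 0, 0, 0, 1, 0, 0]],
  ![
    ![0, 0, 0, 0, 1, 0, 0, 0],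
    ![0, 0, 0, 0, 0, 0, 0, 0],
    ![0, 0, 0, 0, 0, 1, 0, 0],
    ![0, 0, 0, 0, 0, 0, 0, -1],
    ![-1, 0, 0, 0, 0, 0, 0, 0],
    ![0, 0, -1, 0, 0, 0, 0, 0],
    ![0, 0, 0, 0, 0, 0, 0, 0],
    ![0, 0, 0, 1, 0, 0, 0, 0]],
  ![
    ![0, 0, 0, 1, 0, 0, 0, 0],
    ![0, 0, 0, 0, 0, -1, 0, 0],
    ![0, 0, 0, 0, 0, 0, 0, 0],
    ![-1, 0, 0, 0, 0, 0, 0, 0],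
    ![0, 0, 0, 0, 0, 0, 0, 1],
    ![0, 1, 0, 0, 0, 0, 0, 0],
    ![0, 0, 0, 0, 0, 0, 0, 0],
    ![0, 0, 0, 0, -1, 0, 0, 0]],
  ![
    ![0, 0, -1, 0, 0, 0, 0, 0],
    ![0, 0, 0, 0, 0, 0, 0, 1],
    ![1, 0, 0, 0, 0, 0, 0, 0],
    ![0, 0, 0, 0, 0, 0, 0, 0],
    ![0, 0, 0, 0, 0, 1, 0, 0],
    ![0, 0, 0, 0, -1, 0, 0, 0],
    ![0, 0, 0, 0, 0, 0, 0, 0],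
    ![0, -1, 0, 0, 0, 0, 0, 0]],
  ![
    ![0, -1, 0, 0, 0, 0, 0, 0],
    ![1, 0, 0, 0, 0, 0, 0, 0],
    ![0, 0, 0, 0, 0, 0, 0, -1],
    ![0, 0, 0, 0, 0, -1, 0, 0],
    ![0, 0, 0, 0, 0, 0, 0, 0],
    ![0, 0, 0, 1, 0, 0, 0, 0],
    ![0, 0, 0, 0, 0, 0, 0, 0],
    ![0, 0, 1, 0, 0, 0, 0, 0]],
  ![
    ![0, 0, 0, 0, 0, 0, 0, 1],
    ![0, 0, 1, 0, 0, 0, 0, 0],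
    ![0, -1, 0, 0, 0, 0, 0, 0],
    ![0, 0, 0, 0, 1, 0, 0, 0],
    ![0, 0, 0, -1, 0, 0, 0, 0],
    ![0, 0, 0, 0, 0, 0, 0, 0],
    ![0, 0, 0, 0, 0, 0, 0, 0],
    ![-1, 0, 0, 0, 0, 0, 0, 0]],
  ![
    ![0, 0, 0, 0, 0, 0, 0, 0],
    ![0, 0, 0, 0, 0, 0, 0, 0],
    ![0, 0, 0, 0, 0, 0, 0, 0],
    ![0, 0, 0, 0, 0, 0, 0, 0],
    ![0, 0, 0, 0, 0, 0, 0, 0],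
    ![0, 0, 0, 0, 0, 0, 0, 0],
    ![0, 0, 0, 0, 0, 0, 0, 0],
    ![0, 0, 0, 0, 0, 0, 0, 0]],
  ![
    ![0, 0, 0, 0, 0, -1, 0, 0],
    ![0, 0, 0, -1, 0, 0, 0, 0],
    ![0, 0, 0, 0, 1, 0, 0, 0],
    ![0, 1, 0, 0, 0, 0, 0, 0],
    ![0, 0, -1, 0, 0, 0, 0, 0],
    ![1, 0, 0, 0, 0, 0, 0, 0],
    ![0, 0, 0, 0, 0, 0, 0, 0],
    ![0, 0, 0, 0, 0, 0, 0, 0]]],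
![
  ![
    ![0, 0, 0, 0, 0, 0, 0, 0],
    ![0, 0, 1, 0, 0, 0, 0, 0],
    ![0, -1, 0, 0, 0, 0, 0, 0],
    ![0, 0, 0, 0, 1, 0, 0, 0],
    ![0, 0, 0, -1, 0, 0, 0, 0],
    ![0, 0, 0, 0, 0, 0, 1, 0],
    ![0, 0, 0, 0, 0, -1, 0, 0],
    ![0, 0, 0, 0, 0, 0, 0, 0]],
  ![
    ![0, 0, -1, 0, 0, 0, 0, 0],
    ![0, 0, 0, 0, 0, 0, 0, 0],
    ![1, 0, 0, 0, 0, 0, 0, 0],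
    ![0, 0, 0, 0, 0, 0, 1, 0],
    ![0, 0, 0, 0, 0, 1, 0, 0],
    ![0, 0, 0, 0, -1, 0, 0, 0],
    ![0, 0, 0, -1, 0, 0, 0, 0],
    ![0, 0, 0, 0, 0, 0, 0, 0]],
  ![
    ![0, 1, 0, 0, 0, 0, 0, 0],
    ![-1, 0, 0, 0, 0, 0, 0, 0],
    ![0, 0, 0, 0, 0, 0, 0, 0],
    ![0, 0, 0, 0, 0, 1, 0, 0],
    ![0, 0, 0, 0, 0, 0, -1, 0],
    ![0, 0, 0, -1, 0, 0, 0, 0],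
    ![0, 0, 0, 0, 1, 0, 0, 0],
    ![0, 0, 0, 0, 0, 0, 0, 0]],
  ![
    ![0, 0, 0, 0, -1, 0, 0, 0],
    ![0, 0, 0, 0, 0, 0, -1, 0],
    ![0, 0, 0, 0, 0, -1, 0, 0],
    ![0, 0, 0, 0, 0, 0, 0, 0],
    ![1, 0, 0, 0, 0, 0, 0, 0],
    ![0, 0, 1, 0, 0, 0, 0, 0],
    ![0, 1, 0, 0, 0, 0, 0, 0],
    ![0, 0, 0, 0, 0, 0, 0, 0]],
  ![
    ![0, 0, 0, 1, 0, 0, 0, 0],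
    ![0, 0, 0, 0, 0, -1, 0, 0],
    ![0, 0, 0, 0, 0, 0, 1, 0],
    ![-1, 0, 0, 0, 0, 0, 0, 0],
    ![0, 0, 0, 0, 0, 0, 0, 0],
    ![0, 1, 0, 0, 0, 0, 0, 0],
    ![0, 0, -1, 0, 0, 0, 0, 0],
    ![0, 0, 0, 0, 0, 0, 0, 0]],
  ![
    ![0, 0, 0, 0, 0, 0, -1, 0],
    ![0, 0, 0, 0, 1, 0, 0, 0],
    ![0, 0, 0, 1, 0, 0, 0, 0],
    ![0, 0, -1, 0, 0, 0, 0, 0],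
    ![0, -1, 0, 0, 0, 0, 0, 0],
    ![0, 0, 0, 0, 0, 0, 0, 0],
    ![1, 0, 0, 0, 0, 0, 0, 0],
    ![0, 0, 0, 0, 0, 0, 0, 0]],
  ![
    ![0, 0, 0, 0, 0, 1, 0, 0],
    ![0, 0, 0, 1, 0, 0, 0, 0],
    ![0, 0, 0, 0, -1, 0, 0, 0],
    ![0, -1, 0, 0, 0, 0, 0, 0],
    ![0, 0, 1, 0, 0, 0, 0, 0],
    ![-1, 0, 0, 0, 0, 0, 0, 0],
    ![0, 0, 0, 0, 0, 0, 0, 0],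
    ![0, 0, 0, 0, 0, 0, 0, 0]],
  ![
    ![0, 0, 0, 0, 0, 0, 0, 0],
    ![0, 0, 0, 0, 0, 0, 0, 0],
    ![0, 0, 0, 0, 0, 0, 0, 0],
    ![0, 0, 0, 0, 0, 0, 0, 0],
    ![0, 0, 0, 0, 0, 0, 0, 0],
    ![0, 0, 0, 0, 0, 0, 0, 0],
    ![0, 0, 0, 0, 0, 0, 0, 0],
    ![0, 0, 0, 0, 0, 0, 0, 0]]]]

lemma kdZ_cast (a b : Fin 8) : ((kdZ a b : ℤ) : ℝ) = kd a b := by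
  unfold kd kdZ; simp [Fin.ext_iff]

lemma wedge4Z_cast (a b c d i j k l : Fin 8) :
    ((wedge4Z a b c d i j k l : ℤ) : ℝ) = wedge4 a b c d i j k l := by
  rw [wedge4, my_det_fin_four]
  unfold wedge4Z
  push_cast [kdZ_cast]
  norm_num [Matrix.cons_val', Matrix.cons_val_zero, Matrix.cons_val_one, Matrix.head_cons,
    Matrix.empty_val', Matrix.cons_val_fin_one, Matrix.head_fin_const, Matrix.cons_val_succ,
    Matrix.tail_cons]
  simp only [Matrix.cons_val]

lemma PhiZ_cast (i j k l : Fin 8) : ((PhiZ i j k l : ℤ) : ℝ) = Phi i j k l := by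
  unfold Phi PhiZ
  push_cast [wedge4Z_cast]
  ring




section AuxDecide

set_option maxHeartbeats 8000000

lemma phiT_sw1 : ∀ i j k l : Fin 8, phiT j i k l = - phiT i j k l := by decide

lemma phiT_sw2 : ∀ i j k l : Fin 8, phiT i k j l = - phiT i j k l := by decide

lemma phiT_sw3 : ∀ i j k l : Fin 8, phiT i j l k = - phiT i j k l := by decide

lemma base_sorted : ∀ i j k l : Fin 8, i < j → j < k → k < l →
    PhiZ i j k l = phiT i j k l := by decide

lemma contZ_sorted : ∀ p q k l : Fin 8, p < q → k < l →
    (∑ i, ∑ j, phiT p q i j * phiT i j k l)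
      = 6 * (kdZ p k * kdZ q l - kdZ p l * kdZ q k) - 4 * phiT p q k l := by decide

end AuxDecide

lemma PhiZ_sw1 (i j k l : Fin 8) : PhiZ j i k l = - PhiZ i j k l := by
  unfold PhiZ wedge4Z; ring

lemma PhiZ_sw2 (i j k l : Fin 8) : PhiZ i k j l = - PhiZ i j k l := by
  unfold PhiZ wedge4Z; ring

lemma PhiZ_sw3 (i j k l : Fin 8) : PhiZ i j l k = - PhiZ i j k l := by
  unfold PhiZ wedge4Z; ring

/-- Two totally antisymmetric 4-index integer tensors agreeing on strictly
sorted quadruples are equal. -/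
lemma quad_ext (f g : Fin 8 → Fin 8 → Fin 8 → Fin 8 → ℤ)
    (hf1 : ∀ i j k l, f j i k l = -f i j k l)
    (hf2 : ∀ i j k l, f i k j l = -f i j k l)
    (hf3 : ∀ i j k l, f i j l k = -f i j k l)
    (hg1 : ∀ i j k l, g j i k l = -g i j k l)
    (hg2 : ∀ i j k l, g i k j l = -g i j k l)
    (hg3 : ∀ i j k l, g i j l k = -g i j k l)
    (hs : ∀ i j k l, i < j → j < k → k < l → f i j k l = g i j k l) :
    ∀ i j k l, f i j k l = g i j k l := by
  set d : Fin 8 → Fin 8 → Fin 8 → Fin 8 → ℤ :=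
    fun i j k l => f i j k l - g i j k l with hd
  have hd1 : ∀ i j k l, d j i k l = -d i j k l := by
    intro i j k l; simp only [hd]; rw [hf1, hg1]; ring
  have hd2 : ∀ i j k l, d i k j l = -d i j k l := by
    intro i j k l; simp only [hd]; rw [hf2, hg2]; ring
  have hd3 : ∀ i j k l, d i j l k = -d i j k l := by
    intro i j k l; simp only [hd]; rw [hf3, hg3]; ring
  have hds : ∀ i j k l, i < j → j < k → k < l → d i j k l = 0 := by
    intro i j k l h1 h2 h3; simp only [hd]; rw [hs i j k l h1 h2 h3]; ring
  have z12 : ∀ a k l, d a a k l = 0 := fun a k l => by have := hd1 a a k l; omega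
  have z23 : ∀ i a l, d i a a l = 0 := fun i a l => by have := hd2 i a a l; omega
  have z34 : ∀ i j a, d i j a a = 0 := fun i j a => by have := hd3 i j a a; omega
  have z13 : ∀ a j l, d a j a l = 0 := by
    intro a j l; rw [hd2 a a j l, z12]; ring
  have z24 : ∀ i a k, d i a k a = 0 := by
    intro i a k; rw [hd3 i a a k, z23]; ring
  have z14 : ∀ a j k, d a j k a = 0 := by
    intro a j k; rw [hd3 a j a k, z13]; ring
  have suffd : ∀ i j k l, d i j k l = 0 → f i j k l = g i j k l := by
    intro i j k l h; have : f i j k l - g i j k l = 0 := h; omega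
  have L1 : ∀ i j k l, i < j → j < k → d i j k l = 0 := by
    intro i j k l h1 h2
    rcases lt_trichotomy k l with h3 | h3 | h3
    · exact hds _ _ _ _ h1 h2 h3
    · subst h3; exact z34 _ _ _
    · rcases lt_trichotomy j l with h4 | h4 | h4
      · rw [hd3 i j l k, hds i j l k h1 h4 h3]; ring
      · subst h4; exact z24 _ _ _
      · rcases lt_trichotomy i l with h5 | h5 | h5
        · rw [hd3 i j l k, hd2 i l j k, hds i l j k h5 h4 h2]; ring
        · subst h5; exact z14 _ _ _
        · rw [hd3 i j l k, hd2 i l j k, hd1 l i j k, hds l i j k h5 h1 h2]; ring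
  have L2 : ∀ i j k l, i < j → d i j k l = 0 := by
    intro i j k l h1
    rcases lt_trichotomy j k with h2 | h2 | h2
    · exact L1 _ _ _ _ h1 h2
    · subst h2; exact z23 _ _ _
    · rcases lt_trichotomy i k with h3 | h3 | h3
      · rw [hd2 i k j l, L1 i k j l h3 h2]; ring
      · subst h3; exact z13 _ _ _
      · rw [hd2 i k j l, hd1 k i j l, L1 k i j l h3 h1]; ring
  intro i j k l
  apply suffd
  rcases lt_trichotomy i j with h1 | h1 | h1
  · exact L2 _ _ _ _ h1
  · subst h1; exact z12 _ _ _
  · rw [hd1 j i k l, L2 j i k l h1]; ring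

lemma PhiZ_eq_phiT : ∀ i j k l : Fin 8, PhiZ i j k l = phiT i j k l :=
  quad_ext PhiZ phiT PhiZ_sw1 PhiZ_sw2 PhiZ_sw3 phiT_sw1 phiT_sw2 phiT_sw3 base_sorted

lemma Phi_eq (i j k l : Fin 8) : Phi i j k l = ((phiT i j k l : ℤ) : ℝ) := by
  rw [← PhiZ_cast, PhiZ_eq_phiT]

/-- Extension of the contraction identity from sorted pairs to all indices,
over ℤ with `phiT`. -/
lemma contZ : ∀ p q k l : Fin 8,
    (∑ i, ∑ j, phiT p q i j * phiT i j k l)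
      = 6 * (kdZ p k * kdZ q l - kdZ p l * kdZ q k) - 4 * phiT p q k l := by
  have pair_ext : ∀ F G : Fin 8 → Fin 8 → ℤ, (∀ a b, F b a = -F a b) →
      (∀ a b, G b a = -G a b) → (∀ a b, a < b → F a b = G a b) →
      ∀ a b, F a b = G a b := by
    intro F G hF hG h a b
    rcases lt_trichotomy a b with h1 | h1 | h1
    · exact h _ _ h1
    · subst h1; have h2 := hF a a; have h3 := hG a a; omega
    · have h2 := h b a h1; have h3 := hF b a; have h4 := hG b a; omega
  -- sum swap lemmas
  have Ssw : ∀ p q k l : Fin 8,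
      (∑ i, ∑ j, phiT q p i j * phiT i j k l)
        = -(∑ i, ∑ j, phiT p q i j * phiT i j k l) := by
    intro p q k l
    rw [← Finset.sum_neg_distrib]
    refine Finset.sum_congr rfl fun i _ => ?_
    rw [← Finset.sum_neg_distrib]
    refine Finset.sum_congr rfl fun j _ => ?_
    rw [phiT_sw1 p q i j]; ring
  have Ssw2 : ∀ p q k l : Fin 8,
      (∑ i, ∑ j, phiT p q i j * phiT i j l k)
        = -(∑ i, ∑ j, phiT p q i j * phiT i j k l) := by
    intro p q k l
    rw [← Finset.sum_neg_distrib]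
    refine Finset.sum_congr rfl fun i _ => ?_
    rw [← Finset.sum_neg_distrib]
    refine Finset.sum_congr rfl fun j _ => ?_
    rw [phiT_sw3 i j k l]; ring
  -- first extend in (k,l) for sorted (p,q), then in (p,q)
  have step1 : ∀ p q : Fin 8, p < q → ∀ k l : Fin 8,
      (∑ i, ∑ j, phiT p q i j * phiT i j k l)
        = 6 * (kdZ p k * kdZ q l - kdZ p l * kdZ q k) - 4 * phiT p q k l := by
    intro p q hpq k l
    refine pair_ext (fun k l => ∑ i, ∑ j, phiT p q i j * phiT i j k l)
      (fun k l => 6 * (kdZ p k * kdZ q l - kdZ p l * kdZ q k) - 4 * phiT p q k l)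
      (fun a b => Ssw2 p q a b) ?_ (fun a b hab => contZ_sorted p q a b hpq hab) k l
    intro a b
    beta_reduce
    rw [phiT_sw3 p q a b]; ring
  intro p q k l
  refine pair_ext (fun p q => ∑ i, ∑ j, phiT p q i j * phiT i j k l)
    (fun p q => 6 * (kdZ p k * kdZ q l - kdZ p l * kdZ q k) - 4 * phiT p q k l)
    (fun a b => Ssw a b k l) ?_ (fun a b hab => step1 a b hab k l) p q
  intro a b
  beta_reduce
  rw [phiT_sw1 a b k l]; ring

lemma contR (p q k l : Fin 8) :
    (∑ i, ∑ j, Phi p q i j * Phi i j k l)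
      = 6 * (kd p k * kd q l - kd p l * kd q k) - 4 * Phi p q k l := by
  have h := contZ p q k l
  simp only [Phi_eq, ← kdZ_cast]
  exact_mod_cast h


/-- The operator `(Aφ)_{kl} = φ_{ij}Φ_{ijkl}` on 2-forms satisfies
`A∘A + 4A - 12·id = 0`: for every 2-form `φ`,
`(Aφ)_{ij}Φ_{ijkl} = 12 φ_{kl} - 4 (Aφ)_{kl}`. -/
theorem spin7_two_form_operator_quadratic :
    ∀ φ : Fin 8 → Fin 8 → ℝ, (∀ i j, φ i j = -φ j i) →
      ∀ k l, (∑ i, ∑ j, (∑ p, ∑ q, φ p q * Phi p q i j) * Phi i j k l)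
        = 12 * φ k l - 4 * (∑ i, ∑ j, φ i j * Phi i j k l) := by
  intro φ hφ k l
  have comm4 : ∀ F : Fin 8 → Fin 8 → Fin 8 → Fin 8 → ℝ,
      (∑ i, ∑ j, ∑ p, ∑ q, F i j p q) = ∑ p, ∑ q, ∑ i, ∑ j, F i j p q := by
    intro F
    calc (∑ i, ∑ j, ∑ p, ∑ q, F i j p q)
        = ∑ i, ∑ p, ∑ j, ∑ q, F i j p q :=
          Finset.sum_congr rfl fun i _ => Finset.sum_comm
      _ = ∑ p, ∑ i, ∑ j, ∑ q, F i j p q := Finset.sum_comm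
      _ = ∑ p, ∑ i, ∑ q, ∑ j, F i j p q :=
          Finset.sum_congr rfl fun p _ => Finset.sum_congr rfl fun i _ => Finset.sum_comm
      _ = ∑ p, ∑ q, ∑ i, ∑ j, F i j p q :=
          Finset.sum_congr rfl fun p _ => Finset.sum_comm
  have delta : ∀ (f : Fin 8 → ℝ) (a : Fin 8), (∑ p, f p * kd p a) = f a := by
    intro f a
    simp [kd, mul_ite, Finset.sum_ite_eq']
  calc (∑ i, ∑ j, (∑ p, ∑ q, φ p q * Phi p q i j) * Phi i j k l)
      = ∑ i, ∑ j, ∑ p, ∑ q, φ p q * Phi p q i j * Phi i j k l := by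
        simp only [Finset.sum_mul]
    _ = ∑ p, ∑ q, ∑ i, ∑ j, φ p q * Phi p q i j * Phi i j k l :=
        comm4 fun i j p q => φ p q * Phi p q i j * Phi i j k l
    _ = ∑ p, ∑ q, φ p q * ∑ i, ∑ j, Phi p q i j * Phi i j k l := by
        simp only [Finset.mul_sum, mul_assoc]
    _ = ∑ p, ∑ q, φ p q * (6 * (kd p k * kd q l - kd p l * kd q k) - 4 * Phi p q k l) := by
        refine Finset.sum_congr rfl fun p _ => Finset.sum_congr rfl fun q _ => ?_
        rw [contR]
    _ = ∑ p, ∑ q, ((φ p q * kd q l) * (6 * kd p k) - (φ p q * kd q k) * (6 * kd p l)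
          - 4 * (φ p q * Phi p q k l)) := by
        refine Finset.sum_congr rfl fun p _ => Finset.sum_congr rfl fun q _ => by ring
    _ = (∑ p, (∑ q, (φ p q * kd q l) * (6 * kd p k)))
          - (∑ p, (∑ q, (φ p q * kd q k) * (6 * kd p l)))
          - 4 * (∑ p, ∑ q, φ p q * Phi p q k l) := by
        simp only [Finset.sum_sub_distrib, ← Finset.mul_sum]
    _ = 12 * φ k l - 4 * (∑ i, ∑ j, φ i j * Phi i j k l) := by
        have e1 : ∀ p : Fin 8, (∑ q, (φ p q * kd q l) * (6 * kd p k))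
            = (φ p l * (6 * kd p k)) := by
          intro p
          rw [show (∑ q, (φ p q * kd q l) * (6 * kd p k))
              = ∑ q, (φ p q * (6 * kd p k)) * kd q l from
            Finset.sum_congr rfl fun q _ => by ring]
          exact delta (fun q => φ p q * (6 * kd p k)) l
        have e2 : ∀ p : Fin 8, (∑ q, (φ p q * kd q k) * (6 * kd p l))
            = (φ p k * (6 * kd p l)) := by
          intro p
          rw [show (∑ q, (φ p q * kd q k) * (6 * kd p l))
              = ∑ q, (φ p q * (6 * kd p l)) * kd q k from
            Finset.sum_congr rfl fun q _ => by ring]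
          exact delta (fun q => φ p q * (6 * kd p l)) k
        simp only [e1, e2]
        rw [show (∑ p, φ p l * (6 * kd p k)) = ∑ p, (φ p l * 6) * kd p k from
            Finset.sum_congr rfl fun p _ => by ring,
          show (∑ p, φ p k * (6 * kd p l)) = ∑ p, (φ p k * 6) * kd p l from
            Finset.sum_congr rfl fun p _ => by ring,
          delta (fun p => φ p l * 6) k, delta (fun p => φ p k * 6) l]
        rw [hφ l k]
        ring
end
end

section
/- Let R be a 4-tensor on ℝ^8 satisfying R_{ijkl} = −R_{jikl} = −R_{ijlk}, the first Bianchi identity R_{ijkl} + R_{jkil} + R_{kijl} = 0, and the spin(7)-condition R_{ijab}Φ_{abkl} = 2R_{ijkl} for all i,j,k,l (i.e., as a 2-form in its last two arguments R takes values in the Lie algebra spin(7) ⊂ so(8)). Then the Ricci trace of R vanishes: R_{aiaj} = 0 for all i,j (sum over a). -/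
/-!
We work in ℝ⁸ with the standard basis `e₀, …, e₇`.  A `k`-form is a totally antisymmetric
map `(Fin 8)^k → ℝ`; repeated indices are summed over `Fin 8` and `kd` is the Kronecker
delta.  `Phi` is the fundamental 4-form of the standard `Spin(7)`-structure on ℝ⁸,
`Φ = -e₀₁₂₇ + e₀₂₃₆ - e₀₃₄₇ - e₀₅₆₇ + e₀₁₄₆ + e₀₂₄₅ - e₀₁₃₅
     - e₃₄₅₆ - e₁₄₅₇ - e₁₂₅₆ - e₁₂₃₄ - e₂₃₅₇ - e₁₃₆₇ + e₂₄₆₇`.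
-/

noncomputable section

lemma fsa1' : ((1:Fin 4).succAbove (2:Fin 3)) = 3 := rfl
lemma fsa2' : ((2:Fin 4).succAbove (2:Fin 3)) = 3 := rfl
lemma fcs2' : (Fin.castSucc (2:Fin 3)) = (2:Fin 4) := rfl
lemma fsa3' : ((3:Fin 4).succAbove (2:Fin 3)) = 2 := rfl

lemma wedge4_swap13 (a b c d i j k l : Fin 8) :
    wedge4 a b c d k j i l = -wedge4 a b c d i j k l := by
  simp [wedge4, Matrix.det_succ_row_zero, Fin.sum_univ_succ, fsa1', fsa2', fcs2', fsa3']; ring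

lemma wedge4_swap23 (a b c d i j k l : Fin 8) :
    wedge4 a b c d i k j l = -wedge4 a b c d i j k l := by
  simp [wedge4, Matrix.det_succ_row_zero, Fin.sum_univ_succ, fsa1', fsa2', fcs2', fsa3']; ring

lemma Phi_swap13 (i j k l : Fin 8) : Phi k j i l = -Phi i j k l := by
  simp only [Phi,
    wedge4_swap13 0 1 2 7 i j k l, wedge4_swap13 0 2 3 6 i j k l,
    wedge4_swap13 0 3 4 7 i j k l, wedge4_swap13 0 5 6 7 i j k l,
    wedge4_swap13 0 1 4 6 i j k l, wedge4_swap13 0 2 4 5 i j k l,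
    wedge4_swap13 0 1 3 5 i j k l, wedge4_swap13 3 4 5 6 i j k l,
    wedge4_swap13 1 4 5 7 i j k l, wedge4_swap13 1 2 5 6 i j k l,
    wedge4_swap13 1 2 3 4 i j k l, wedge4_swap13 2 3 5 7 i j k l,
    wedge4_swap13 1 3 6 7 i j k l, wedge4_swap13 2 4 6 7 i j k l]
  ring

lemma Phi_swap23 (i j k l : Fin 8) : Phi i k j l = -Phi i j k l := by
  simp only [Phi,
    wedge4_swap23 0 1 2 7 i j k l, wedge4_swap23 0 2 3 6 i j k l,
    wedge4_swap23 0 3 4 7 i j k l, wedge4_swap23 0 5 6 7 i j k l,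
    wedge4_swap23 0 1 4 6 i j k l, wedge4_swap23 0 2 4 5 i j k l,
    wedge4_swap23 0 1 3 5 i j k l, wedge4_swap23 3 4 5 6 i j k l,
    wedge4_swap23 1 4 5 7 i j k l, wedge4_swap23 1 2 5 6 i j k l,
    wedge4_swap23 1 2 3 4 i j k l, wedge4_swap23 2 3 5 7 i j k l,
    wedge4_swap23 1 3 6 7 i j k l, wedge4_swap23 2 4 6 7 i j k l]
  ring

lemma triple_comm13 (f : Fin 8 → Fin 8 → Fin 8 → ℝ) :
    (∑ i, ∑ a, ∑ b, f i a b) = ∑ b, ∑ a, ∑ i, f i a b := by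
  calc (∑ i, ∑ a, ∑ b, f i a b)
      = ∑ i, ∑ b, ∑ a, f i a b :=
        Finset.sum_congr rfl fun i _ => Finset.sum_comm ..
    _ = ∑ b, ∑ i, ∑ a, f i a b := Finset.sum_comm ..
    _ = ∑ b, ∑ a, ∑ i, f i a b :=
        Finset.sum_congr rfl fun b _ => Finset.sum_comm ..

/-- A curvature-type tensor satisfying the first Bianchi identity and taking values in
`spin(7)` in its last two arguments is Ricci flat. -/
theorem spin7_bianchi_curvature_ricci_flat :
    ∀ R : Fin 8 → Fin 8 → Fin 8 → Fin 8 → ℝ,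
      (∀ i j k l, R i j k l = -R j i k l) →
      (∀ i j k l, R i j k l = -R i j l k) →
      (∀ i j k l, R i j k l + R j k i l + R k i j l = 0) →
      (∀ i j k l, (∑ a, ∑ b, R i j a b * Phi a b k l) = 2 * R i j k l) →
      ∀ i j, (∑ a, R a i a j) = 0 := by
  intro R hA hB hBianchi hSpin p q
  -- pair symmetry
  have pair : ∀ i j k l, R i j k l = R k l i j := by
    intro i j k l
    linarith [hBianchi i j k l, hBianchi j k l i, hBianchi k l i j, hBianchi l i j k,
      hA i j k l, hA j k i l, hA k i j l, hA j k l i, hA k l j i, hA l j k i,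
      hA k l i j, hA l i k j, hA i k l j, hA l i j k, hA i j l k, hA j l i k,
      hB i j k l, hB j k i l, hB k i j l, hB j k l i, hB k l j i, hB l j k i,
      hB k l i j, hB l i k j, hB i k l j, hB l i j k, hB i j l k, hB j l i k]
  set S : ℝ := ∑ i, ∑ a, ∑ b, R i p a b * Phi a b i q with hS
  have h1 : S = 2 * ∑ a, R a p a q := by
    rw [hS, Finset.mul_sum]
    exact Finset.sum_congr rfl fun i _ => hSpin i p i q
  have hT1 : (∑ i, ∑ a, ∑ b, R p a i b * Phi a b i q) = S := by
    rw [hS, Finset.sum_comm]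
    refine Finset.sum_congr rfl fun x _ => Finset.sum_congr rfl fun y _ =>
      Finset.sum_congr rfl fun b _ => ?_
    rw [hA p x y b, Phi_swap13 y b x q]
    ring
  have hT2 : (∑ i, ∑ a, ∑ b, R a i p b * Phi a b i q) = S := by
    rw [triple_comm13 (fun i a b => R a i p b * Phi a b i q), hS]
    refine Finset.sum_congr rfl fun x _ => Finset.sum_congr rfl fun a _ =>
      Finset.sum_congr rfl fun y _ => ?_
    rw [pair a y p x, hA p x a y, Phi_swap23 a y x q]
    ring
  have hsum : S + (∑ i, ∑ a, ∑ b, R p a i b * Phi a b i q)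
      + (∑ i, ∑ a, ∑ b, R a i p b * Phi a b i q) = 0 := by
    rw [hS, ← Finset.sum_add_distrib, ← Finset.sum_add_distrib]
    refine Finset.sum_eq_zero fun i _ => ?_
    rw [← Finset.sum_add_distrib, ← Finset.sum_add_distrib]
    refine Finset.sum_eq_zero fun a _ => ?_
    rw [← Finset.sum_add_distrib, ← Finset.sum_add_distrib]
    refine Finset.sum_eq_zero fun b _ => ?_
    linear_combination Phi a b i q * hBianchi i p a b
  rw [hT1, hT2] at hsum
  linarith [h1, hsum]
end
end
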